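/- arXiv:1403.2158 — 7 statements merged into one kernel-verified Lean document; each statement's English description precedes it below -/
import Mathlib

section
/- Let K be a complete linear order with a least element a and a greatest element b, and L any linear order. Then there exists an order preserving surjection g : L → K if and only if there exists an order preserving injection f : K → L. -/
theorem stmt_9 {K L : Type*} [LinearOrder K] [LinearOrder L]
    (a : K) (ha : ∀ x : K, a ≤ x) (b : K) (hb : ∀ x : K, x ≤ b)
    (hcomp : ∀ A : Set K, A.Nonempty → BddAbove A → ∃ c : K, IsLUB A c) :
    (∃ g : L → K, Function.Surjective g ∧ Monotone g) ↔
      ∃ f : K → L, Function.Injective f ∧ Monotone f := by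
  constructor
  · rintro ⟨g, hgs, hgm⟩
    refine ⟨Function.surjInv hgs, ?_, ?_⟩
    · intro x y h
      have := congrArg g h
      simpa [Function.surjInv_eq] using this
    · intro x y hxy
      rcases eq_or_lt_of_le hxy with rfl | h
      · exact le_rfl
      · by_contra hle
        push_neg at hle
        have h2 : g (Function.surjInv hgs y) ≤ g (Function.surjInv hgs x) := hgm hle.le
        rw [Function.surjInv_eq hgs, Function.surjInv_eq hgs] at h2
        exact absurd h2 (not_le.2 h)
  · rintro ⟨f, hfi, hfm⟩
    have hsm : StrictMono f := hfm.strictMono_of_injective hfi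
    set A : L → Set K := fun y => {x | f x ≤ y} ∪ {a} with hA
    have hne : ∀ y, (A y).Nonempty := fun y => ⟨a, Or.inr rfl⟩
    have hbdd : ∀ y, BddAbove (A y) := fun y => ⟨b, fun x _ => hb x⟩
    choose c hc using fun y => hcomp (A y) (hne y) (hbdd y)
    refine ⟨c, ?_, ?_⟩
    · intro x
      refine ⟨f x, ?_⟩
      have hEq : A (f x) = Set.Iic x := by
        ext z
        simp only [hA, Set.mem_union, Set.mem_setOf_eq, Set.mem_singleton_iff,
          Set.mem_Iic, hsm.le_iff_le]
        constructor
        · rintro (h | rfl)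
          · exact h
          · exact ha x
        · exact Or.inl
      exact (hEq ▸ hc (f x)).unique isLUB_Iic
    · intro y y' h
      exact (hc y).mono (hc y')
        (Set.union_subset_union_left _ (fun x hx => le_trans hx h))
end

section
/- Let K be a complete linear order with a least element but no greatest element, and L any linear order. Then there exists an order preserving surjection g : L → K if and only if there exists an order preserving injection f : K → L whose range is cofinal in L (i.e., for every y ∈ L there exists x ∈ K with y ≤ f(x)). -/
theorem stmt_10 {K L : Type*} [LinearOrder K] [LinearOrder L]
    (a : K) (ha : ∀ x : K, a ≤ x) (hmax : ¬ ∃ b : K, ∀ x : K, x ≤ b)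
    (hcomp : ∀ A : Set K, A.Nonempty → BddAbove A → ∃ c : K, IsLUB A c) :
    (∃ g : L → K, Function.Surjective g ∧ Monotone g) ↔
      ∃ f : K → L, Function.Injective f ∧ Monotone f ∧ ∀ y : L, ∃ x : K, y ≤ f x := by
  classical
  push_neg at hmax
  constructor
  · rintro ⟨g, hgs, hgm⟩
    choose f hf using hgs
    have hsm : StrictMono f := by
      intro x x' hlt
      by_contra hle
      push_neg at hle
      have := hgm hle
      rw [hf, hf] at this
      exact absurd this (not_le.2 hlt)
    refine ⟨f, hsm.injective, hsm.monotone, fun y => ?_⟩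
    obtain ⟨x, hx⟩ := hmax (g y)
    refine ⟨x, ?_⟩
    by_contra hylt
    push_neg at hylt
    have := hgm hylt.le
    rw [hf] at this
    exact absurd (this.trans_lt hx) (lt_irrefl x)
  · rintro ⟨f, hfi, hfm, hcof⟩
    have hsm : StrictMono f := hfm.strictMono_of_injective hfi
    set A : L → Set K := fun y => {x | f x ≤ y} with hA
    have hbdd : ∀ y, BddAbove (A y) := by
      intro y
      obtain ⟨x, hx⟩ := hcof y
      exact ⟨x, fun x' hx' => hsm.le_iff_le.1 (le_trans hx' hx)⟩
    set g : L → K := fun y =>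
      if h : (A y).Nonempty then (hcomp (A y) h (hbdd y)).choose else a with hg
    have hglub : ∀ y, (A y).Nonempty → IsLUB (A y) (g y) := by
      intro y h
      rw [hg]
      simp only [dif_pos h]
      exact (hcomp (A y) h (hbdd y)).choose_spec
    refine ⟨g, fun x => ⟨f x, ?_⟩, fun y y' hle => ?_⟩
    · have hAx : A (f x) = Set.Iic x := by
        ext x'
        simp [hA, hsm.le_iff_le]
      have hne : (A (f x)).Nonempty := ⟨x, by simp [hA]⟩
      have := hglub (f x) hne
      rw [hAx] at this
      exact this.unique isLUB_Iic
    · by_cases hne : (A y).Nonempty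
      · have hne' : (A y').Nonempty := hne.mono (fun x hx => le_trans hx hle)
        exact (hglub y hne).2 fun x hx => (hglub y' hne').1 (le_trans hx hle)
      · rw [hg]
        simp only [dif_neg hne]
        exact ha _
end

section
/- Let K be a complete linear order with no least and no greatest element, and L any linear order. Then there exists an order preserving surjection g : L → K if and only if there exists an order preserving injection f : K → L whose range is both coinitial and cofinal in L. -/
theorem stmt_11 {K L : Type*} [LinearOrder K] [LinearOrder L] [Nonempty K]
    (hmin : ¬ ∃ a : K, ∀ x : K, a ≤ x) (hmax : ¬ ∃ b : K, ∀ x : K, x ≤ b)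
    (hcomp : ∀ A : Set K, A.Nonempty → BddAbove A → ∃ c : K, IsLUB A c) :
    (∃ g : L → K, Function.Surjective g ∧ Monotone g) ↔
      ∃ f : K → L, Function.Injective f ∧ Monotone f ∧
        (∀ y : L, ∃ x : K, f x ≤ y) ∧ (∀ y : L, ∃ x : K, y ≤ f x) := by
  constructor
  · rintro ⟨g, gsurj, gmono⟩
    choose f hf using gsurj
    refine ⟨f, ?_, ?_, ?_, ?_⟩
    · intro a b h
      have := congrArg g h
      rwa [hf, hf] at this
    · intro a b hab
      rcases eq_or_lt_of_le hab with rfl | hlt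
      · exact le_rfl
      · by_contra h
        push_neg at h
        have := gmono h.le
        rw [hf, hf] at this
        exact absurd (le_antisymm hab this) hlt.ne
    · intro y
      obtain ⟨x, hx⟩ : ∃ x : K, x < g y := by
        by_contra h; push_neg at h; exact hmin ⟨g y, h⟩
      refine ⟨x, ?_⟩
      by_contra h
      push_neg at h
      have := gmono h.le
      rw [hf] at this
      exact absurd (this.trans_lt hx) (lt_irrefl _)
    · intro y
      obtain ⟨x, hx⟩ : ∃ x : K, g y < x := by
        by_contra h; push_neg at h; exact hmax ⟨g y, h⟩
      refine ⟨x, ?_⟩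
      by_contra h
      push_neg at h
      have := gmono h.le
      rw [hf] at this
      exact absurd (hx.trans_le this) (lt_irrefl _)
  · rintro ⟨f, finj, fmono, hco, hcf⟩
    have fsm : StrictMono f := fmono.strictMono_of_injective finj
    have hA : ∀ y : L, ∃ c : K, IsLUB {x : K | f x ≤ y} c := by
      intro y
      obtain ⟨x₀, hx₀⟩ := hco y
      obtain ⟨x₁, hx₁⟩ := hcf y
      refine hcomp _ ⟨x₀, hx₀⟩ ⟨x₁, fun x hx => ?_⟩
      by_contra h
      push_neg at h
      exact absurd ((fsm h).trans_le (hx.trans hx₁)) (lt_irrefl _)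
    choose g hg using hA
    refine ⟨g, ?_, ?_⟩
    · intro x
      refine ⟨f x, ?_⟩
      have : {x' : K | f x' ≤ f x} = Set.Iic x := by
        ext x'; simp [fsm.le_iff_le]
      have h2 := hg (f x)
      rw [this] at h2
      exact h2.unique isLUB_Iic
    · intro y y' hyy'
      exact (hg y).2 fun x hx => (hg y').1 (hx.trans hyy')
end

section
/- For a countable linear order L, there exists an order preserving surjection from 1 + ℚ (the rationals with a least element adjoined) onto L if and only if L has a least element. -/
section Aux
variable {L : Type*} [LinearOrder L]

instance : DenselyOrdered (L ×ₗ ℚ) := by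
  constructor
  rintro ⟨a, q⟩ ⟨b, r⟩ h
  rcases Prod.Lex.lt_iff.mp h with h | ⟨h1, h2⟩
  · exact ⟨toLex (a, q + 1), Prod.Lex.lt_iff.mpr (Or.inr ⟨rfl, lt_add_one q⟩),
      Prod.Lex.lt_iff.mpr (Or.inl h)⟩
  · obtain ⟨s, hs1, hs2⟩ := exists_between h2
    exact ⟨toLex (a, s), Prod.Lex.lt_iff.mpr (Or.inr ⟨rfl, hs1⟩),
      Prod.Lex.lt_iff.mpr (Or.inr ⟨h1, hs2⟩)⟩

instance : NoMinOrder (L ×ₗ ℚ) := by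
  constructor
  rintro ⟨a, q⟩
  exact ⟨toLex (a, q - 1), Prod.Lex.lt_iff.mpr (Or.inr ⟨rfl, sub_one_lt q⟩)⟩

instance : NoMaxOrder (L ×ₗ ℚ) := by
  constructor
  rintro ⟨a, q⟩
  exact ⟨toLex (a, q + 1), Prod.Lex.lt_iff.mpr (Or.inr ⟨rfl, lt_add_one q⟩)⟩

instance [Countable L] : Countable (L ×ₗ ℚ) := inferInstanceAs (Countable (L × ℚ))

end Aux

theorem stmt_13 {L : Type*} [LinearOrder L] [Countable L] [Nonempty L] :
    (∃ g : WithBot ℚ → L, Function.Surjective g ∧ Monotone g) ↔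
      ∃ m : L, ∀ x : L, m ≤ x := by
  constructor
  · rintro ⟨g, hsurj, hmono⟩
    refine ⟨g ⊥, fun x => ?_⟩
    obtain ⟨y, rfl⟩ := hsurj x
    exact hmono bot_le
  · rintro ⟨m, hm⟩
    haveI : Nonempty (L ×ₗ ℚ) := inferInstanceAs (Nonempty (L × ℚ))
    obtain ⟨e⟩ : Nonempty (ℚ ≃o L ×ₗ ℚ) := Order.iso_of_countable_dense ℚ (L ×ₗ ℚ)
    refine ⟨fun x => x.recBotCoe m (fun q => (ofLex (e q)).1), ?_, ?_⟩
    · intro l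
      exact ⟨(e.symm (toLex (l, 0)) : ℚ), by simp⟩
    · intro x y hxy
      induction x using WithBot.recBotCoe with
      | bot => exact hm _
      | coe q =>
        induction y using WithBot.recBotCoe with
        | bot => exact absurd hxy (by simp)
        | coe r =>
          have h : e q ≤ e r := e.monotone (by exact_mod_cast hxy)
          exact Prod.Lex.monotone_fst _ _ h
end

section
/- For a countable linear order L, there exists an order preserving surjection from 1 + ℚ + 1 (the rationals with both a least and a greatest element adjoined) onto L if and only if L has both a least and a greatest element. -/
theorem stmt_14 {L : Type*} [LinearOrder L] [Countable L] [Nonempty L] :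
    (∃ g : WithBot (WithTop ℚ) → L, Function.Surjective g ∧ Monotone g) ↔
      (∃ m : L, ∀ x : L, m ≤ x) ∧ (∃ M : L, ∀ x : L, x ≤ M) := by
  constructor
  · rintro ⟨g, hsurj, hmono⟩
    refine ⟨⟨g ⊥, fun x => ?_⟩, ⟨g ⊤, fun x => ?_⟩⟩
    · obtain ⟨y, rfl⟩ := hsurj x
      exact hmono bot_le
    · obtain ⟨y, rfl⟩ := hsurj x
      exact hmono le_top
  · rintro ⟨⟨m, hm⟩, ⟨M, hM⟩⟩
    have : Countable (L ×ₗ ℚ) := inferInstanceAs (Countable (L × ℚ))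
    have : Nonempty (L ×ₗ ℚ) := inferInstanceAs (Nonempty (L × ℚ))
    have : DenselyOrdered (L ×ₗ ℚ) := by
      constructor
      intro p q h
      have h' : toLex (ofLex p) < toLex (ofLex q) := h
      rcases Prod.Lex.lt_iff.mp h' with h'' | ⟨heq, h''⟩
      · refine ⟨toLex ((ofLex p).1, (ofLex p).2 + 1),
          Prod.Lex.lt_iff.mpr (Or.inr ⟨rfl, lt_add_one _⟩),
          Prod.Lex.lt_iff.mpr (Or.inl h'')⟩
      · obtain ⟨c, hc₁, hc₂⟩ := exists_between h''
        exact ⟨toLex ((ofLex p).1, c), Prod.Lex.lt_iff.mpr (Or.inr ⟨rfl, hc₁⟩),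
          Prod.Lex.lt_iff.mpr (Or.inr ⟨heq, hc₂⟩)⟩
    obtain ⟨e⟩ : Nonempty (ℚ ≃o (L ×ₗ ℚ)) := Order.iso_of_countable_dense ℚ (L ×ₗ ℚ)
    refine ⟨fun x => match x with
      | ⊥ => m
      | (⊤ : WithTop ℚ) => M
      | ((q : ℚ) : WithTop ℚ) => (ofLex (e q)).1, ?_, ?_⟩
    · intro l
      exact ⟨((e.symm (toLex (l, 0)) : ℚ) : WithTop ℚ), by simp⟩
    · rintro (_ | _ | a) (_ | _ | b) hab
      · exact le_rfl
      · exact hm _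
      · exact hm _
      · exact (Option.some_ne_none _ (le_bot_iff.mp hab)).elim
      · exact le_rfl
      · exact absurd (WithBot.coe_le_coe.mp hab) (WithTop.not_top_le_coe b)
      · exact (Option.some_ne_none _ (le_bot_iff.mp hab)).elim
      · exact hM _
      · have hab' : a ≤ b := WithTop.coe_le_coe.mp (WithBot.coe_le_coe.mp hab)
        have h2 := e.monotone hab'
        have h3 : toLex (ofLex (e a)) ≤ toLex (ofLex (e b)) := h2
        rcases Prod.Lex.le_iff.mp h3 with h | ⟨h, _⟩
        · exact le_of_lt h
        · exact le_of_eq h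
end

section
/- If a countable linear order L admits order preserving surjections onto both 1 + ℚ and ℚ + 1, then L admits an order preserving surjection onto ℚ. (Equivalently, the supremum of [1+ℚ] and [ℚ+1] in the surjection quasi-order is [ℚ].) -/
private def fpos (q : ℚ) : ℚ := if 1 ≤ q then q else (2 - q)⁻¹

private lemma fpos_pos (q : ℚ) : 0 < fpos q := by
  unfold fpos
  split
  · linarith
  · have : (0:ℚ) < 2 - q := by push_neg at *; linarith
    positivity

private lemma fpos_mono : Monotone fpos := by
  intro a b hab
  unfold fpos
  by_cases ha : 1 ≤ a
  · rw [if_pos ha, if_pos (ha.trans hab)]; exact hab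
  · rw [if_neg ha]
    push_neg at ha
    by_cases hb : 1 ≤ b
    · rw [if_pos hb]
      have h1 : (2 - a)⁻¹ ≤ 1 := by
        rw [inv_le_one_iff₀]; right; linarith
      linarith
    · rw [if_neg hb]
      push_neg at hb
      have h2 : (0:ℚ) < 2 - a := by linarith
      have h3 : (0:ℚ) < 2 - b := by linarith
      rw [inv_le_inv₀ h2 h3]
      linarith

private lemma fpos_surj {t : ℚ} (ht : 0 < t) : ∃ q, fpos q = t := by
  rcases le_or_gt 1 t with h | h
  · exact ⟨t, if_pos h⟩
  · refine ⟨2 - t⁻¹, ?_⟩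
    have h1 : (1:ℚ) < t⁻¹ := (one_lt_inv₀ ht).mpr h
    have h2 : ¬ (1 ≤ 2 - t⁻¹) := by push_neg; linarith
    rw [fpos, if_neg h2]
    ring_nf
    exact inv_inv t

theorem stmt_15 {L : Type*} [LinearOrder L] [Countable L]
    (h1 : ∃ g : L → WithBot ℚ, Function.Surjective g ∧ Monotone g)
    (h2 : ∃ g : L → WithTop ℚ, Function.Surjective g ∧ Monotone g) :
    ∃ g : L → ℚ, Function.Surjective g ∧ Monotone g := by
  obtain ⟨g1, hg1s, hg1m⟩ := h1
  obtain ⟨g2, hg2s, hg2m⟩ := h2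
  by_cases hc : ∃ x : L, g1 x ≠ ⊥ ∧ g2 x ≠ ⊤
  · -- there is a point mapped into the ℚ-part by both maps; split L at that point
    obtain ⟨x₀, h1b, h2t⟩ := hc
    obtain ⟨r, hr⟩ := WithBot.ne_bot_iff_exists.mp h1b
    obtain ⟨s, hs⟩ := WithTop.ne_top_iff_exists.mp h2t
    refine ⟨fun x => if x ≤ x₀ then (g2 x).untopD s - s else (g1 x).unbotD r - r, ?_, ?_⟩
    · intro q
      rcases lt_trichotomy q 0 with hq | hq | hq
      · obtain ⟨x, hx⟩ := hg2s ↑(q + s)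
        have hxle : x ≤ x₀ := by
          by_contra h
          have := hg2m (not_le.mp h).le
          rw [hx, ← hs, WithTop.coe_le_coe] at this
          linarith
        refine ⟨x, ?_⟩
        simp only [if_pos hxle, hx, WithTop.untopD_coe]
        ring
      · refine ⟨x₀, ?_⟩
        simp only [if_pos (le_refl x₀), ← hs, WithTop.untopD_coe]
        linarith
      · obtain ⟨x, hx⟩ := hg1s ↑(q + r)
        have hxle : ¬ x ≤ x₀ := by
          intro h
          have := hg1m h
          rw [hx, ← hr, WithBot.coe_le_coe] at this
          linarith
        refine ⟨x, ?_⟩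
        simp only [if_neg hxle, hx, WithBot.unbotD_coe]
        ring
    · intro x y hxy
      dsimp only
      by_cases hx : x ≤ x₀
      · have h2x : g2 x ≤ ↑s := by rw [hs]; exact hg2m hx
        obtain ⟨a, ha, has⟩ := WithTop.le_coe_iff.mp h2x
        by_cases hy : y ≤ x₀
        · have h2y : g2 y ≤ ↑s := by rw [hs]; exact hg2m hy
          obtain ⟨b, hb, hbs⟩ := WithTop.le_coe_iff.mp h2y
          have hab : a ≤ b := by
            have := hg2m hxy
            rwa [ha, hb, WithTop.coe_le_coe] at this
          rw [if_pos hx, if_pos hy, ha, hb, WithTop.untopD_coe, WithTop.untopD_coe]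
          linarith
        · have h1y : (↑r : WithBot ℚ) ≤ g1 y := by
            rw [hr]; exact hg1m (not_le.mp hy).le
          obtain ⟨b, hb, hrb⟩ := WithBot.coe_le_iff.mp h1y
          rw [if_pos hx, if_neg hy, ha, hb, WithTop.untopD_coe, WithBot.unbotD_coe]
          linarith
      · have hy : ¬ y ≤ x₀ := fun h => hx (hxy.trans h)
        have h1x : (↑r : WithBot ℚ) ≤ g1 x := by
          rw [hr]; exact hg1m (not_le.mp hx).le
        obtain ⟨a, ha, hra⟩ := WithBot.coe_le_iff.mp h1x
        have h1y : (↑r : WithBot ℚ) ≤ g1 y := le_trans h1x (hg1m hxy)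
        obtain ⟨b, hb, hrb⟩ := WithBot.coe_le_iff.mp h1y
        have hab : a ≤ b := by
          have := hg1m hxy
          rwa [ha, hb, WithBot.coe_le_coe] at this
        rw [if_neg hx, if_neg hy, ha, hb, WithBot.unbotD_coe, WithBot.unbotD_coe]
        linarith
  · -- every point is mapped to ⊥ by g1 or to ⊤ by g2
    push_neg at hc
    refine ⟨fun x => if g2 x = ⊤ then (if g1 x = ⊥ then 0 else fpos ((g1 x).unbotD 0))
        else min ((g2 x).untopD 0) 0, ?_, ?_⟩
    · intro q
      rcases le_or_gt q 0 with hq | hq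
      · obtain ⟨x, hx⟩ := hg2s ↑q
        have ht : g2 x ≠ ⊤ := by rw [hx]; exact WithTop.coe_ne_top
        refine ⟨x, ?_⟩
        simp only [if_neg ht, hx, WithTop.untopD_coe]
        exact min_eq_left hq
      · obtain ⟨p, hp⟩ := fpos_surj hq
        obtain ⟨x, hx⟩ := hg1s ↑p
        have hb : g1 x ≠ ⊥ := by rw [hx]; exact WithBot.coe_ne_bot
        have ht : g2 x = ⊤ := hc x hb
        refine ⟨x, ?_⟩
        simp only [if_pos ht, if_neg hb, hx, WithBot.unbotD_coe]
        exact hp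
    · intro x y hxy
      dsimp only
      by_cases htx : g2 x = ⊤
      · have hty : g2 y = ⊤ := top_le_iff.mp (htx ▸ hg2m hxy)
        rw [if_pos htx, if_pos hty]
        by_cases hbx : g1 x = ⊥
        · rw [if_pos hbx]
          by_cases hby : g1 y = ⊥
          · rw [if_pos hby]
          · rw [if_neg hby]; exact (fpos_pos _).le
        · have hby : g1 y ≠ ⊥ := by
            intro h
            exact hbx (le_bot_iff.mp (h ▸ hg1m hxy))
          obtain ⟨a, ha⟩ := WithBot.ne_bot_iff_exists.mp hbx
          obtain ⟨b, hb⟩ := WithBot.ne_bot_iff_exists.mp hby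
          have hab : a ≤ b := by
            have := hg1m hxy
            rwa [← ha, ← hb, WithBot.coe_le_coe] at this
          rw [if_neg hbx, if_neg hby, ← ha, ← hb, WithBot.unbotD_coe, WithBot.unbotD_coe]
          exact fpos_mono hab
      · obtain ⟨a, ha⟩ := WithTop.ne_top_iff_exists.mp htx
        rw [if_neg htx]
        by_cases hty : g2 y = ⊤
        · rw [if_pos hty]
          have hle : min ((g2 x).untopD 0) 0 ≤ 0 := min_le_right _ _
          refine hle.trans ?_
          by_cases hby : g1 y = ⊥
          · rw [if_pos hby]
          · rw [if_neg hby]; exact (fpos_pos _).le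
        · obtain ⟨b, hb⟩ := WithTop.ne_top_iff_exists.mp hty
          have hab : a ≤ b := by
            have := hg2m hxy
            rwa [← ha, ← hb, WithTop.coe_le_coe] at this
          rw [if_neg hty, ← ha, ← hb, WithTop.untopD_coe, WithTop.untopD_coe]
          exact min_le_min hab le_rfl
end

section
/- Let β be a countable ordinal of the form ω^δ · m for some ordinal δ and positive integer m (a finite multiple of an indecomposable ordinal). Then for every non-zero ordinal α ≤ β there is an order preserving surjection from β onto α. Conversely, if β is countable and every non-zero α ≤ β admits an order preserving surjection from β, then β = ω^δ · m for some δ and m > 0. -/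
open Ordinal Set Order

namespace Stmt19

/-- Strictly monotone cofinal map from `Iio α` into `Iio β` starting at `0`. -/
def Data (α β : Ordinal) : Prop :=
  ∃ h : Ordinal → Ordinal, h 0 = 0 ∧ (∀ i, i < α → h i < β) ∧
    (∀ i j, i < j → j < α → h i < h j) ∧ (∀ x, x < β → ∃ i, i < α ∧ x < h i)

lemma isLimit_omega0_opow {δ : Ordinal} (hδ : δ ≠ 0) : IsSuccLimit (ω ^ δ) := by
  rcases zero_or_succ_or_isSuccLimit δ with h | ⟨σ, rfl⟩ | h
  · exact absurd h hδ
  · rw [opow_succ]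
    exact isSuccLimit_mul_right (opow_pos σ omega0_pos) isSuccLimit_omega0
  · exact isSuccLimit_opow one_lt_omega0 h

lemma cofseq (o : Ordinal) (ho : IsSuccLimit o) (hc : o.card ≤ Cardinal.aleph0) :
    ∃ a : ℕ → Ordinal, (∀ n, a n < o) ∧ ∀ x, x < o → ∃ n, x < a n := by
  have hne : Nonempty o.ToType := toType_nonempty_iff_ne_zero.2 (isSuccLimit_iff.1 ho).1
  have hcnt : Countable o.ToType := by
    rw [← Cardinal.mk_le_aleph0_iff, Cardinal.mk_toType]; exact hc
  obtain ⟨f, hf⟩ := exists_surjective_nat o.ToType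
  refine ⟨fun n => ((ToType.mk (o := o)).symm (f n)).1, fun n => ((ToType.mk (o := o)).symm (f n)).2,
    fun x hx => ?_⟩
  obtain ⟨n, hn⟩ := hf (ToType.mk (o := o) ⟨x + 1, ho.succ_lt hx⟩)
  refine ⟨n, ?_⟩
  simp only [hn, OrderIso.symm_apply_apply]
  exact lt_succ x

lemma data_comp {α γ β : Ordinal} (hγ : IsSuccLimit γ) (h1 : Data α γ) (h2 : Data γ β) :
    Data α β := by
  obtain ⟨f, f0, fmap, fmono, fcof⟩ := h1
  obtain ⟨g, g0, gmap, gmono, gcof⟩ := h2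
  refine ⟨g ∘ f, by simp [f0, g0], fun i hi => gmap _ (fmap i hi),
    fun i j hij hj => gmono _ _ (fmono i j hij hj) (fmap j hj), fun x hx => ?_⟩
  obtain ⟨j, hj, hxj⟩ := gcof x hx
  obtain ⟨i, hi, hji⟩ := fcof j hj
  exact ⟨i, hi, hxj.trans (gmono j (f i) hji (fmap i hi))⟩

lemma data_paste {α' β' : Ordinal} (c : Ordinal) (hα' : α' ≠ 0) (h : Data α' β') :
    Data (c + α') (c + β') := by
  obtain ⟨f, f0, fmap, fmono, fcof⟩ := h
  have hβ' : 0 < β' := by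
    have := fmap 0 (pos_iff_ne_zero.2 hα')
    exact lt_of_le_of_lt zero_le this
  refine ⟨fun j => if j < c then j else c + f (j - c), ?_, ?_, ?_, ?_⟩
  · rcases eq_or_ne c 0 with rfl | hc
    · simp [f0]
    · simp [pos_iff_ne_zero.2 hc]
  · intro j hj
    by_cases hjc : j < c
    · simp only [hjc, if_true]
      exact hjc.trans_le (le_self_add)
    · simp only [hjc, if_false]
      push_neg at hjc
      have : j - c < α' := by
        rwa [Ordinal.sub_lt_of_le hjc]
      exact (add_lt_add_iff_left c).2 (fmap _ this)
  · intro i j hij hj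
    by_cases hic : i < c <;> by_cases hjc : j < c
    · simpa [hic, hjc]
    · push_neg at hjc
      simp only [hic, hjc.not_gt, if_true, if_false]
      exact hic.trans_le (le_self_add)
    · exact absurd (hij.trans hjc) (by push_neg at hic; exact hic.not_gt)
    · push_neg at hic hjc
      simp only [hic.not_gt, hjc.not_gt, if_false]
      have hj' : j - c < α' := by rwa [Ordinal.sub_lt_of_le hjc]
      refine (add_lt_add_iff_left c).2 (fmono _ _ ?_ hj')
      rw [← add_lt_add_iff_left c, Ordinal.add_sub_cancel_of_le hic,
        Ordinal.add_sub_cancel_of_le hjc]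
      exact hij
  · intro x hx
    by_cases hxc : x < c
    · refine ⟨c, ?_, ?_⟩
      · exact (lt_add_of_pos_right c (pos_iff_ne_zero.2 hα'))
      · simp [f0]
        exact hxc
    · push_neg at hxc
      have : x - c < β' := by rwa [Ordinal.sub_lt_of_le hxc]
      obtain ⟨i, hi, hxi⟩ := fcof _ this
      refine ⟨c + i, (add_lt_add_iff_left c).2 hi, ?_⟩
      have : ¬ c + i < c := by simp
      simp only [this, if_false, Ordinal.add_sub_cancel]
      calc x = c + (x - c) := (Ordinal.add_sub_cancel_of_le hxc).symm
        _ < c + f i := (add_lt_add_iff_left c).2 hxi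

end Stmt19
namespace Stmt19
open Ordinal Set Order

lemma data_D1 {δ : Ordinal} (hδ : δ ≠ 0) {k m : Ordinal} (hkm : k ≤ m) :
    Data (ω ^ δ * (k + 1)) (ω ^ δ * (m + 1)) := by
  have hω : IsSuccLimit (ω ^ δ) := isLimit_omega0_opow hδ
  have hmono : ω ^ δ * k ≤ ω ^ δ * m := mul_le_mul_right hkm _
  refine ⟨fun i => if i ≤ ω ^ δ * k then i else ω ^ δ * m + (i - ω ^ δ * k), ?_, ?_, ?_, ?_⟩
  · simp
  · intro i hi
    rw [mul_add_one] at hi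
    by_cases h : i ≤ ω ^ δ * k
    · simp only [h, if_true, mul_add_one]
      exact lt_of_le_of_lt (h.trans hmono) (lt_add_of_pos_right _ hω.pos)
    · simp only [h, if_false, mul_add_one]
      push_neg at h
      exact (add_lt_add_iff_left _).2 (by rwa [Ordinal.sub_lt_of_le h.le])
  · intro i j hij hj
    by_cases hik : i ≤ ω ^ δ * k <;> by_cases hjk : j ≤ ω ^ δ * k
    · simpa [hik, hjk]
    · simp only [hik, hjk, if_true, if_false]
      push_neg at hjk
      calc i ≤ ω ^ δ * m := hik.trans hmono
        _ < ω ^ δ * m + (j - ω ^ δ * k) := lt_add_of_pos_right _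
            (by rwa [pos_iff_ne_zero, ne_eq, Ordinal.sub_eq_zero_iff_le, not_le])
    · exact absurd (hij.le.trans hjk) hik
    · push_neg at hik hjk
      simp only [hik.not_ge, hjk.not_ge, if_false]
      refine (add_lt_add_iff_left _).2 ?_
      rw [← add_lt_add_iff_left (ω ^ δ * k), Ordinal.add_sub_cancel_of_le hik.le,
        Ordinal.add_sub_cancel_of_le hjk.le]
      exact hij
  · intro x hx
    have h1δ : (1 : Ordinal) < ω ^ δ := one_lt_of_isSuccLimit hω
    by_cases hxm : x < ω ^ δ * m
    · refine ⟨ω ^ δ * k + 1, ?_, ?_⟩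
      · rw [mul_add_one]
        exact (add_lt_add_iff_left _).2 h1δ
      · have hnle : ¬ ω ^ δ * k + 1 ≤ ω ^ δ * k := by
          simp
        simp only [hnle, if_false, Ordinal.add_sub_cancel]
        exact hxm.trans (lt_add_of_pos_right _ zero_lt_one)
    · push_neg at hxm
      set t := x - ω ^ δ * m with ht
      have hxeq : x = ω ^ δ * m + t := (Ordinal.add_sub_cancel_of_le hxm).symm
      have htδ : t < ω ^ δ := by
        rw [ht, Ordinal.sub_lt_of_le hxm, ← mul_add_one]
        exact hx
      refine ⟨ω ^ δ * k + (t + 1), ?_, ?_⟩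
      · rw [mul_add_one]
        exact (add_lt_add_iff_left _).2 (hω.succ_lt htδ)
      · have hnle : ¬ ω ^ δ * k + (t + 1) ≤ ω ^ δ * k := by
          simp [pos_iff_ne_zero]
        simp only [hnle, if_false, Ordinal.add_sub_cancel]
        rw [hxeq, ← add_assoc]
        exact lt_add_of_pos_right _ zero_lt_one

end Stmt19
namespace Stmt19
open Ordinal Set Order

lemma data_core {δ α : Ordinal} (hδ : δ ≠ 0) (hcard : (ω ^ δ).card ≤ Cardinal.aleph0)
    (hα : IsSuccLimit α) (hαδ : α < ω ^ δ) : Data α (ω ^ δ) := by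
  classical
  have hω : IsSuccLimit (ω ^ δ) := isLimit_omega0_opow hδ
  obtain ⟨a, ha, hacof⟩ := cofseq α hα ((Ordinal.card_le_card hαδ.le).trans hcard)
  obtain ⟨b, hb, hbcof⟩ := cofseq (ω ^ δ) hω hcard
  set c : ℕ → Ordinal := fun n => Nat.rec 0 (fun n cn => max (cn + α) (b n) + 1) n with hc
  have hclt : ∀ n, c n < ω ^ δ := by
    intro n
    induction n with
    | zero => exact opow_pos δ omega0_pos
    | succ n ih =>
      exact hω.succ_lt (max_lt (isPrincipal_add_omega0_opow δ ih hαδ) (hb n))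
  have hcs : ∀ n, c n < c (n + 1) := by
    intro n
    calc c n ≤ c n + α := le_self_add
      _ ≤ max (c n + α) (b n) := le_max_left _ _
      _ < c (n + 1) := lt_add_one _
  have hcmono : StrictMono c := strictMono_nat_of_lt_succ hcs
  have hkey : ∀ n p, n < p → c n + α < c p := by
    intro n p hnp
    calc c n + α ≤ max (c n + α) (b n) := le_max_left _ _
      _ < c (n + 1) := lt_add_one _
      _ ≤ c p := hcmono.monotone hnp
  have ex : ∀ i, i < α → ∃ n, i < a n + 1 := by
    intro i hi
    obtain ⟨n, hn⟩ := hacof i hi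
    exact ⟨n, hn.trans (lt_add_one _)⟩
  refine ⟨fun i => if hi : i < α then c (Nat.find (ex i hi)) + i else 0, ?_, ?_, ?_, ?_⟩
  · simp only [dif_pos hα.pos]
    have h0 : Nat.find (ex 0 hα.pos) = 0 := by
      rw [Nat.find_eq_zero]
      exact lt_of_le_of_lt zero_le (lt_add_one _)
    rw [h0]
    show c 0 + 0 = 0
    simp [hc]
  · intro i hi
    simp only [dif_pos hi]
    exact isPrincipal_add_omega0_opow δ (hclt _) (hi.trans hαδ)
  · intro i j hij hj
    have hi : i < α := hij.trans hj
    simp only [dif_pos hi, dif_pos hj]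
    have hNN : Nat.find (ex i hi) ≤ Nat.find (ex j hj) :=
      Nat.find_mono fun n hn => hij.trans hn
    rcases eq_or_lt_of_le hNN with he | hlt
    · rw [he]
      exact (add_lt_add_iff_left _).2 hij
    · calc c (Nat.find (ex i hi)) + i < c (Nat.find (ex i hi)) + α :=
          (add_lt_add_iff_left _).2 hi
        _ < c (Nat.find (ex j hj)) := hkey _ _ hlt
        _ ≤ c (Nat.find (ex j hj)) + j := le_self_add
  · intro x hx
    obtain ⟨n, hn⟩ := hbcof x hx
    set i := (Finset.range (n + 1)).sup (fun k => a k + 1) with hi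
    have hiα : i < α := by
      rw [hi, Finset.sup_lt_iff hα.pos]
      exact fun k _ => hα.succ_lt (ha k)
    refine ⟨i, hiα, ?_⟩
    simp only [dif_pos hiα]
    have hfind : n + 1 ≤ Nat.find (ex i hiα) := by
      by_contra hcon
      push_neg at hcon
      have h1 : i < a (Nat.find (ex i hiα)) + 1 := Nat.find_spec (ex i hiα)
      have h2 : a (Nat.find (ex i hiα)) + 1 ≤ i := by
        exact Finset.le_sup (f := fun k => a k + 1) (Finset.mem_range.2 hcon)
      exact absurd (h1.trans_le h2) (lt_irrefl i)
    calc x < b n := hn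
      _ < c (n + 1) := lt_of_le_of_lt (le_max_right _ _) (lt_add_one _)
      _ ≤ c (Nat.find (ex i hiα)) := hcmono.monotone hfind
      _ ≤ _ := le_self_add

end Stmt19
namespace Stmt19
open Ordinal Set Order Function

lemma data_limit {δ : Ordinal} {m : ℕ} (hδ : δ ≠ 0) (hm : 0 < m)
    (hcard : (ω ^ δ * m : Ordinal).card ≤ Cardinal.aleph0) {α : Ordinal} (hα : IsSuccLimit α)
    (hαβ : α ≤ ω ^ δ * m) : Data α (ω ^ δ * m) := by
  have hωδ0 : (ω ^ δ : Ordinal) ≠ 0 := (opow_pos δ omega0_pos).ne'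
  rcases eq_or_lt_of_le hαβ with rfl | hlt
  · exact ⟨id, rfl, fun i hi => hi, fun i j hij _ => hij,
      fun x hx => ⟨x + 1, hα.succ_lt hx, lt_add_one x⟩⟩
  have hkω : α / ω ^ δ < ω := by
    rw [div_lt hωδ0]
    exact hlt.trans_le (mul_le_mul_right (nat_lt_omega0 m).le _)
  obtain ⟨kk, hkk⟩ := lt_omega0.1 hkω
  have hsum : ω ^ δ * kk + α % ω ^ δ = α := by rw [← hkk]; exact div_add_mod α (ω ^ δ)
  have hα'δ : α % ω ^ δ < ω ^ δ := mod_lt α hωδ0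
  have hkkm : kk < m := by
    by_contra hcon
    push_neg at hcon
    have h1 : (ω ^ δ * m : Ordinal) ≤ ω ^ δ * kk := mul_le_mul_right (Nat.cast_le.2 hcon) _
    have h2 : (ω ^ δ * kk : Ordinal) ≤ α := le_of_le_of_eq (le_self_add) hsum
    exact absurd (h1.trans h2) hlt.not_ge
  rcases zero_or_succ_or_isSuccLimit (α % ω ^ δ) with h0 | ⟨σ, hσ⟩ | hlim
  · -- α = ω^δ * kk
    rw [h0, add_zero] at hsum
    have hkk0 : kk ≠ 0 := by
      rintro rfl
      rw [Nat.cast_zero, mul_zero] at hsum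
      exact (isSuccLimit_iff.1 hα).1 hsum.symm
    obtain ⟨j, rfl⟩ := Nat.exists_eq_succ_of_ne_zero hkk0
    obtain ⟨m', rfl⟩ := Nat.exists_eq_succ_of_ne_zero hm.ne'
    have hjm : (j : Ordinal) ≤ m' := by
      have : j ≤ m' := by omega
      exact_mod_cast this
    have := data_D1 hδ hjm
    rw [← hsum]
    push_cast
    exact this
  · exfalso
    rw [← hσ, add_succ] at hsum
    exact not_isSuccLimit_succ _ (hsum ▸ hα)
  · have hωβ : (ω ^ δ : Ordinal) ≤ ω ^ δ * m := by
      calc (ω ^ δ : Ordinal) = ω ^ δ * 1 := (mul_one _).symm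
        _ ≤ ω ^ δ * m := mul_le_mul_right (by exact_mod_cast hm) _
    have d1 : Data (α % ω ^ δ) (ω ^ δ) :=
      data_core hδ ((Ordinal.card_le_card hωβ).trans hcard) hlim hα'δ
    set M : ℕ := m - kk with hM
    have hM1 : 1 ≤ M := by omega
    have hMc : ((M - 1 : ℕ) : Ordinal) + 1 = (M : Ordinal) := by
      have : (M - 1) + 1 = M := by omega
      exact_mod_cast this
    have d2 : Data (ω ^ δ) (ω ^ δ * M) := by
      have := data_D1 hδ (k := 0) (m := ((M - 1 : ℕ) : Ordinal)) zero_le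
      rwa [zero_add, mul_one, hMc] at this
    have d3 : Data (α % ω ^ δ) (ω ^ δ * M) := data_comp (isLimit_omega0_opow hδ) d1 d2
    have d4 : Data (ω ^ δ * kk + α % ω ^ δ) (ω ^ δ * kk + ω ^ δ * M) :=
      data_paste _ (isSuccLimit_iff.1 hlim).1 d3
    rw [hsum, ← mul_add] at d4
    have : (kk : Ordinal) + (M : Ordinal) = (m : Ordinal) := by
      have : kk + M = m := by omega
      exact_mod_cast this
    rwa [this] at d4

lemma data_to_surj {α β : Ordinal} (hα0 : α ≠ 0) (hd : Data α β) :
    ∃ g : Iio β → Iio α, Surjective g ∧ Monotone g := by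
  obtain ⟨f, f0, fmap, fmono, fcof⟩ := hd
  have hαpos : 0 < α := pos_iff_ne_zero.2 hα0
  have hS : ∀ x : Iio β, (0 : Ordinal) ∈ {i | i < α ∧ f i ≤ x.1} := by
    intro x
    exact ⟨hαpos, f0.le.trans zero_le⟩
  have hub : ∀ x : Iio β, ∃ j, j < α ∧ ∀ i ∈ {i | i < α ∧ f i ≤ x.1}, i ≤ j := by
    intro x
    obtain ⟨j, hj, hxj⟩ := fcof x.1 x.2
    refine ⟨j, hj, fun i hi => ?_⟩
    by_contra hcon
    push_neg at hcon
    exact absurd ((fmono j i hcon hi.1).trans_le hi.2) hxj.not_gt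
  have hlt : ∀ x : Iio β, sSup {i | i < α ∧ f i ≤ x.1} < α := by
    intro x
    obtain ⟨j, hj, hub'⟩ := hub x
    exact lt_of_le_of_lt (csSup_le ⟨0, hS x⟩ hub') hj
  refine ⟨fun x => ⟨sSup {i | i < α ∧ f i ≤ x.1}, hlt x⟩, ?_, ?_⟩
  · rintro ⟨i, hi⟩
    refine ⟨⟨f i, fmap i hi⟩, Subtype.ext ?_⟩
    refine le_antisymm (csSup_le ⟨0, hS _⟩ fun j hj => ?_) (le_csSup ?_ ⟨hi, le_rfl⟩)
    · by_contra hcon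
      push_neg at hcon
      exact absurd ((fmono i j hcon hj.1).trans_le hj.2) (lt_irrefl _)
    · exact ⟨i, fun j hj => by
        by_contra hcon
        push_neg at hcon
        exact absurd ((fmono i j hcon hj.1).trans_le hj.2) (lt_irrefl _)⟩
  · intro x y hxy
    simp only [Subtype.mk_le_mk]
    obtain ⟨j, hj, hub'⟩ := hub y
    exact csSup_le_csSup ⟨j, hub'⟩ ⟨0, hS x⟩ fun i hi => ⟨hi.1, hi.2.trans hxy⟩

lemma transfer {α β : Ordinal} (g' : Iio β → Iio α) (hs : Surjective g') (hm : Monotone g') :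
    ∃ g : β.ToType → α.ToType, Surjective g ∧ Monotone g := by
  refine ⟨(ToType.mk (o := α)) ∘ g' ∘ (ToType.mk (o := β)).symm, ?_, ?_⟩
  · exact (ToType.mk (o := α)).surjective.comp (hs.comp (ToType.mk (o := β)).symm.surjective)
  · exact (ToType.mk (o := α)).monotone.comp (hm.comp (ToType.mk (o := β)).symm.monotone)

end Stmt19
open Ordinal Set Order Function Stmt19 in
theorem stmt_19 (β : Ordinal) (hβ0 : β ≠ 0) (hβc : β.card ≤ Cardinal.aleph0) :
    (∃ (δ : Ordinal) (m : ℕ), 0 < m ∧ β = Ordinal.omega0 ^ δ * m) ↔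
      ∀ α : Ordinal, α ≠ 0 → α ≤ β →
        ∃ g : β.ToType → α.ToType, Function.Surjective g ∧ Monotone g := by
  constructor
  · rintro ⟨δ, m, hm, rfl⟩ α hα0 hαβ
    rcases zero_or_succ_or_isSuccLimit α with rfl | ⟨σ, rfl⟩ | hαlim
    · exact absurd rfl hα0
    · refine transfer (fun x => ⟨min x.1 σ, lt_of_le_of_lt (min_le_right _ _) (lt_succ σ)⟩)
        ?_ ?_
      · rintro ⟨i, hi⟩
        have hiσ : i ≤ σ := lt_succ_iff.1 hi
        exact ⟨⟨i, hi.trans_le hαβ⟩, Subtype.ext (min_eq_left hiσ)⟩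
      · intro x y hxy
        simp only [Subtype.mk_le_mk]
        exact Subtype.mk_le_mk.2 (min_le_min (show x.1 ≤ y.1 from hxy) le_rfl)
    · have hδ : δ ≠ 0 := by
        rintro rfl
        rw [opow_zero, one_mul] at hαβ
        exact absurd ((omega0_le_of_isSuccLimit hαlim).trans hαβ) (nat_lt_omega0 m).not_ge
      obtain ⟨g', hs, hmg⟩ := data_to_surj hα0 (data_limit hδ hm hβc hαlim hαβ)
      exact transfer g' hs hmg
  · intro hyp
    set δ := log ω β with hδdef
    have hωδ0 : (ω ^ δ : Ordinal) ≠ 0 := (opow_pos δ omega0_pos).ne'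
    have hωδβ : ω ^ δ ≤ β := opow_log_le_self ω hβ0
    have hβδ1 : β < ω ^ δ * ω := by
      rw [← opow_succ]
      exact lt_opow_succ_log_self one_lt_omega0 β
    have hqω : β / ω ^ δ < ω := (div_lt hωδ0).2 hβδ1
    obtain ⟨m, hq⟩ := lt_omega0.1 hqω
    have hm0 : m ≠ 0 := by
      rintro rfl
      rw [Nat.cast_zero] at hq
      have h1 : β < ω ^ δ * 1 := (div_lt hωδ0).1 (by rw [hq]; exact zero_lt_one)
      rw [mul_one] at h1
      exact absurd hωδβ h1.not_ge
    have hsum : ω ^ δ * m + β % ω ^ δ = β := by rw [← hq]; exact div_add_mod β (ω ^ δ)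
    set ρ := β % ω ^ δ with hρdef
    have hρδ : ρ < ω ^ δ := mod_lt β hωδ0
    rcases eq_or_ne ρ 0 with hρ | hρ0
    · exact ⟨δ, m, Nat.pos_of_ne_zero hm0, by rw [← hsum, hρ, add_zero]⟩
    exfalso
    have hδ0 : δ ≠ 0 := by
      intro h
      apply hρ0
      rw [hρdef, h, opow_zero, Ordinal.mod_one]
    set A := (ω ^ δ * m : Ordinal) with hA
    have hA0 : A ≠ 0 := _root_.mul_ne_zero hωδ0 (Nat.cast_ne_zero.2 hm0)
    have hAβ : A ≤ β := by rw [← hsum]; exact le_self_add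
    have hAβlt : A < β := by
      rw [← hsum]
      exact lt_add_of_pos_right _ (pos_iff_ne_zero.2 hρ0)
    have hAlim : IsSuccLimit A := isSuccLimit_mul_left (isLimit_omega0_opow hδ0)
      (by exact_mod_cast Nat.pos_of_ne_zero hm0)
    obtain ⟨g, hgs, hgm⟩ := hyp A hA0 hAβ
    set G : Iio β → Iio A := (ToType.mk (o := A)).symm ∘ g ∘ (ToType.mk (o := β)) with hG
    have hGm : Monotone G :=
      (ToType.mk (o := A)).symm.monotone.comp (hgm.comp (ToType.mk (o := β)).monotone)
    have hGs : Surjective G :=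
      (ToType.mk (o := A)).symm.surjective.comp (hgs.comp (ToType.mk (o := β)).surjective)
    set f : Ordinal → Ordinal := fun i => sInf {x | ∃ hx : x < β, (G ⟨x, hx⟩).1 = i} with hf
    have hmem : ∀ i, i < A → ∃ hx : f i < β, (G ⟨f i, hx⟩).1 = i := by
      intro i hi
      have hne : {x | ∃ hx : x < β, (G ⟨x, hx⟩).1 = i}.Nonempty := by
        obtain ⟨y, hy⟩ := hGs ⟨i, hi⟩
        exact ⟨y.1, y.2, by rw [Subtype.coe_eta, hy]⟩
      exact csInf_mem hne
    have hfs : ∀ i j, i < j → j < A → f i < f j := by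
      intro i j hij hj
      obtain ⟨hfi, hGi⟩ := hmem i (hij.trans hj)
      obtain ⟨hfj, hGj⟩ := hmem j hj
      by_contra hcon
      push_neg at hcon
      have h3 := hGm (show (⟨f j, hfj⟩ : Iio β) ≤ ⟨f i, hfi⟩ from hcon)
      have h4 := Subtype.coe_le_coe.2 h3
      rw [hGi, hGj] at h4
      exact absurd hij h4.not_gt
    have hfcof : ∀ x, x < β → ∃ i, i < A ∧ x < f i := by
      intro x hx
      have hiA : ((G ⟨x, hx⟩ : Iio A) : Ordinal) < A := (G ⟨x, hx⟩).2
      have hsA : (G ⟨x, hx⟩ : Iio A).1 + 1 < A := by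
        rw [← succ_eq_add_one]
        exact hAlim.succ_lt hiA
      obtain ⟨hf1, hG1⟩ := hmem _ hsA
      refine ⟨(G ⟨x, hx⟩ : Iio A).1 + 1, hsA, ?_⟩
      by_contra hcon
      push_neg at hcon
      have h3 := hGm (show (⟨f _, hf1⟩ : Iio β) ≤ ⟨x, hx⟩ from hcon)
      have h4 := Subtype.coe_le_coe.2 h3
      rw [hG1] at h4
      exact absurd h4 (lt_add_one _).not_ge
    obtain ⟨i0, hi0A, hi0⟩ := hfcof A hAβlt
    have hi0ω : i0 + ω ^ δ ≤ A := by
      have hj : i0 / ω ^ δ < (m : Ordinal) := by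
        rw [div_lt hωδ0]
        exact hi0A
      have h1 : i0 % ω ^ δ + ω ^ δ = ω ^ δ := add_omega0_opow (mod_lt _ hωδ0)
      calc i0 + ω ^ δ = ω ^ δ * (i0 / ω ^ δ) + i0 % ω ^ δ + ω ^ δ := by rw [div_add_mod]
        _ = ω ^ δ * (i0 / ω ^ δ) + ω ^ δ := by rw [add_assoc, h1]
        _ = ω ^ δ * (i0 / ω ^ δ + 1) := by rw [mul_add_one]
        _ ≤ ω ^ δ * m := mul_le_mul_right (by rwa [← succ_eq_add_one, succ_le_iff]) _
    have hdom : ∀ t, t < ω ^ δ → i0 + t < A := fun t ht =>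
      lt_of_lt_of_le ((add_lt_add_iff_left i0).2 ht) hi0ω
    have main : ∀ t, t < ω ^ δ → A + t ≤ f (i0 + t) := by
      intro t
      induction t using Ordinal.induction with
      | h t IH =>
        intro htω
        rcases zero_or_succ_or_isSuccLimit t with rfl | ⟨s, rfl⟩ | hlim
        · rw [add_zero, add_zero]; exact hi0.le
        · have hs : s < ω ^ δ := (lt_succ s).trans htω
          have h1 : A + s ≤ f (i0 + s) := IH s (lt_succ s) hs
          have h2 : f (i0 + s) < f (i0 + succ s) :=
            hfs _ _ ((add_lt_add_iff_left i0).2 (lt_succ s)) (hdom _ htω)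
          rw [add_succ, succ_le_iff]
          exact h1.trans_lt h2
        · rw [add_le_iff_of_isSuccLimit hlim]
          intro s hs
          have h1 : A + s ≤ f (i0 + s) := IH s hs (hs.trans htω)
          have h2 : f (i0 + s) < f (i0 + t) :=
            hfs _ _ ((add_lt_add_iff_left i0).2 hs) (hdom _ htω)
          exact h1.trans h2.le
    have hfin : ρ < ρ := by
      have h1 : A + ρ ≤ f (i0 + ρ) := main _ hρδ
      have h2 : f (i0 + ρ) < β := (hmem _ (hdom _ hρδ)).choose
      have h3 : A + ρ < β := h1.trans_lt h2
      rw [← hsum] at h3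
      exact (add_lt_add_iff_left A).1 h3
    exact absurd hfin (lt_irrefl _)
end
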